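/- Let C = A ⊗ K[z]/(z^2) where A is a graded Artinian K-algebra, and suppose C_{i+1} ≠ 0. If ℓ ∈ A_1 is such that multiplication ·ℓ : A_j → A_{j+1} has maximal rank for all j and ·ℓ^2 : A_{i-1} → A_{i+1} has maximal rank, then the map μ_{ℓ + z} : C_i → C_{i+1} has maximal rank. -/

import Mathlib

open TensorProduct

/-- The algebra `K[z]/(z²)`. -/
noncomputable abbrev DualNumbersQuot (K : Type*) [Field K] :=
  Polynomial K ⧸ Ideal.span {(Polynomial.X : Polynomial K) ^ 2}

/-- The class of `z` in `K[z]/(z²)`. -/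
noncomputable def zClass (K : Type*) [Field K] : DualNumbersQuot K :=
  Ideal.Quotient.mk _ Polynomial.X

/-- The standard grading on `K[z]/(z²)`: degree 0 is spanned by `1`, degree 1 by `z`,
and all higher degrees vanish. -/
noncomputable def dualGrading (K : Type*) [Field K] : ℕ → Submodule K (DualNumbersQuot K) :=
  fun n => if n = 0 then Submodule.span K {1}
    else if n = 1 then Submodule.span K {zClass K} else ⊥

/-- The degree-`n` graded piece of `A ⊗[K] B`, namely `⊕_{p+q=n} A_p ⊗ B_q`. -/
noncomputable def tensorPiece {K A B : Type*} [Field K] [CommRing A] [CommRing B]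
    [Algebra K A] [Algebra K B] (𝒜 : ℕ → Submodule K A) (ℬ : ℕ → Submodule K B)
    (n : ℕ) : Submodule K (A ⊗[K] B) :=
  ⨆ p ∈ Finset.range (n + 1),
    LinearMap.range (TensorProduct.mapIncl (𝒜 p) (ℬ (n - p)))

/-!
Writing `C_n = A_n ⊗ 1 ⊕ A_{n-1} ⊗ z`, the relation `z² = 0` makes multiplication by
`ℓ + z` act on coordinates as `(a, b) ↦ (ℓ a, a + ℓ b)`. A kernel element therefore has
`a = -ℓ b` and `ℓ² b = 0`, and solving `(ℓ a, a + ℓ b) = (c, d)` amounts to solving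
`ℓ² b = c - ℓ d` with `a = d - ℓ b`. So both halves of maximal rank for `μ_{ℓ+z}` reduce to
the corresponding half for `·ℓ² : A_{i-1} → A_{i+1}`.
-/

open Polynomial

section TmulPair

variable {R A B : Type*} [CommRing R] [AddCommGroup A] [Module R A] [AddCommGroup B] [Module R B]

noncomputable def tmulPair (u v : B) : A × A →ₗ[R] A ⊗[R] B :=
  ((TensorProduct.mk R A B).flip u).coprod ((TensorProduct.mk R A B).flip v)

@[simp] lemma tmulPair_apply (u v : B) (p : A × A) : tmulPair u v p = p.1 ⊗ₜ[R] u + p.2 ⊗ₜ v :=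
  rfl

lemma tmulPair_basis_injective (𝒞 : Module.Basis (Fin 2) R B) :
    Function.Injective (tmulPair (R := R) (A := A) (𝒞 0) (𝒞 1)) := by
  rw [injective_iff_map_eq_zero]
  rintro ⟨a, b⟩ h
  have h0 := congrArg (equivFinsuppOfBasisRight 𝒞 · 0) h
  have h1 := congrArg (equivFinsuppOfBasisRight 𝒞 · 1) h
  exact Prod.ext (by simpa using h0) (by simpa using h1)

end TmulPair

lemma mul_tmulPair_one {R A B : Type*} [CommRing R] [CommRing A] [Algebra R A] [CommRing B]
    [Algebra R B] {z : B} (hz : z * z = 0) (ℓ a b : A) :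
    (ℓ ⊗ₜ[R] (1 : B) + (1 : A) ⊗ₜ[R] z) * tmulPair 1 z (a, b) =
      tmulPair (R := R) 1 z (ℓ * a, a + ℓ * b) := by
  simp only [tmulPair_apply, add_mul, mul_add, Algebra.TensorProduct.tmul_mul_tmul, one_mul,
    mul_one, hz, tmul_zero, add_tmul]
  abel

lemma tmul_mem_tensorPiece {K A B : Type*} [Field K] [CommRing A] [CommRing B]
    [Algebra K A] [Algebra K B] {𝒜 : ℕ → Submodule K A} {ℬ : ℕ → Submodule K B}
    {p n : ℕ} (hp : p ≤ n) {a : A} (ha : a ∈ 𝒜 p) {b : B} (hb : b ∈ ℬ (n - p)) :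
    a ⊗ₜ[K] b ∈ tensorPiece 𝒜 ℬ n :=
  (le_iSup₂ (f := fun p (_ : p ∈ Finset.range (n + 1)) =>
      LinearMap.range (TensorProduct.mapIncl (𝒜 p) (ℬ (n - p)))) p
      (Finset.mem_range.mpr (by omega))) ⟨⟨a, ha⟩ ⊗ₜ ⟨b, hb⟩, rfl⟩

namespace DualNumbersQuot

variable (K : Type*) [Field K]

lemma mk_eq_zero_iff (p : K[X]) :
    (Ideal.Quotient.mk _ p : DualNumbersQuot K) = 0 ↔ p.coeff 0 = 0 ∧ p.coeff 1 = 0 := by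
  rw [Ideal.Quotient.eq_zero_iff_mem, Ideal.mem_span_singleton, X_pow_dvd_iff]
  constructor
  · intro h
    exact ⟨h 0 (by norm_num), h 1 (by norm_num)⟩
  · rintro ⟨h0, h1⟩ d hd
    interval_cases d <;> assumption

lemma smul_one_add_smul_zClass (s t : K) :
    s • (1 : DualNumbersQuot K) + t • zClass K = Ideal.Quotient.mk _ (C s + C t * X) := by
  rw [← smul_eq_C_mul, ← mul_one (C s), ← smul_eq_C_mul, ← Ideal.Quotient.mkₐ_eq_mk K,
    map_add, map_smul, map_smul, map_one]
  rfl

lemma mk_eq_coeff_smul_one_add_coeff_smul_zClass (p : K[X]) :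
    (Ideal.Quotient.mk _ p : DualNumbersQuot K) = p.coeff 0 • 1 + p.coeff 1 • zClass K := by
  rw [smul_one_add_smul_zClass, ← sub_eq_zero, ← map_sub, mk_eq_zero_iff]
  simp [coeff_C]

lemma zClass_mul_self : zClass K * zClass K = 0 := by
  rw [zClass, ← map_mul, mk_eq_zero_iff]
  simp

lemma linearIndependent_one_zClass : LinearIndependent K ![1, zClass K] := by
  rw [LinearIndependent.pair_iff]
  intro s t h
  rw [smul_one_add_smul_zClass, mk_eq_zero_iff] at h
  simpa [coeff_C] using h

lemma span_one_zClass : Submodule.span K (Set.range ![1, zClass K]) = ⊤ := by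
  refine Submodule.eq_top_iff'.mpr fun c => ?_
  obtain ⟨p, rfl⟩ := Ideal.Quotient.mk_surjective c
  rw [mk_eq_coeff_smul_one_add_coeff_smul_zClass]
  exact Submodule.add_mem _ (Submodule.smul_mem _ _ (Submodule.subset_span ⟨0, rfl⟩))
    (Submodule.smul_mem _ _ (Submodule.subset_span ⟨1, rfl⟩))

noncomputable def basisOneZClass : Module.Basis (Fin 2) K (DualNumbersQuot K) :=
  Module.Basis.mk (linearIndependent_one_zClass K) (span_one_zClass K).ge

lemma tmulPair_one_zClass_injective {A : Type*} [AddCommGroup A] [Module K A] :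
    Function.Injective (tmulPair (R := K) (A := A) 1 (zClass K)) := by
  simpa [basisOneZClass] using tmulPair_basis_injective (A := A) (basisOneZClass K)

lemma one_mem_dualGrading_zero : (1 : DualNumbersQuot K) ∈ dualGrading K 0 := by
  simp [dualGrading, Submodule.mem_span_singleton_self]

lemma zClass_mem_dualGrading_one : zClass K ∈ dualGrading K 1 := by
  simp [dualGrading, Submodule.mem_span_singleton_self]

variable {K} {A : Type*} [CommRing A] [Algebra K A] {𝒜 : ℕ → Submodule K A}

lemma tmul_one_mem_tensorPiece {n : ℕ} {a : A} (ha : a ∈ 𝒜 n) :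
    a ⊗ₜ[K] (1 : DualNumbersQuot K) ∈ tensorPiece 𝒜 (dualGrading K) n :=
  tmul_mem_tensorPiece le_rfl ha (by simpa using one_mem_dualGrading_zero K)

lemma tmul_zClass_mem_tensorPiece {n : ℕ} {b : A} (hb : b ∈ 𝒜 n) :
    b ⊗ₜ[K] zClass K ∈ tensorPiece 𝒜 (dualGrading K) (n + 1) :=
  tmul_mem_tensorPiece n.le_succ hb (by simpa using zClass_mem_dualGrading_one K)

lemma tmul_mem_map_tmulPair {p n : ℕ} (hp : p ≤ n) {a : A} (ha : a ∈ 𝒜 p)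
    {c : DualNumbersQuot K} (hc : c ∈ dualGrading K (n - p)) :
    a ⊗ₜ[K] c ∈ ((𝒜 n).prod (𝒜 (n - 1))).map (tmulPair 1 (zClass K)) := by
  rcases (by omega : p = n ∨ p + 1 = n ∨ n - p ≥ 2) with rfl | rfl | hnp
  · obtain ⟨k, rfl⟩ := Submodule.mem_span_singleton.mp (by simpa [dualGrading] using hc)
    exact ⟨(k • a, 0), ⟨Submodule.smul_mem _ k ha, Submodule.zero_mem _⟩, by simp [smul_tmul]⟩
  · obtain ⟨k, rfl⟩ := Submodule.mem_span_singleton.mp (by simpa [dualGrading] using hc)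
    exact ⟨(0, k • a), ⟨Submodule.zero_mem _, Submodule.smul_mem _ k (by simpa using ha)⟩,
      by simp [smul_tmul]⟩
  · have hc0 : c = 0 := by
      simpa [dualGrading, show n - p ≠ 0 by omega, show n - p ≠ 1 by omega] using hc
    simp [hc0]

lemma tensorPiece_le_map_tmulPair (n : ℕ) :
    tensorPiece 𝒜 (dualGrading K) n ≤ ((𝒜 n).prod (𝒜 (n - 1))).map (tmulPair 1 (zClass K)) := by
  refine iSup₂_le fun p hp => ?_
  rw [TensorProduct.range_mapIncl, Submodule.map₂_le]
  exact fun a ha c hc => tmul_mem_map_tmulPair (Nat.lt_succ_iff.mp (Finset.mem_range.mp hp)) ha hc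

end DualNumbersQuot

open DualNumbersQuot

section Lefschetz

variable {K A : Type*} [Field K] [CommRing A] [Algebra K A] {𝒜 : ℕ → Submodule K A}

lemma lefschetz_injective_of_sq_injective {i : ℕ} {ℓ : A}
    (hinj : ∀ x ∈ 𝒜 (i - 1), ℓ ^ 2 * x = 0 → x = 0) :
    ∀ x ∈ tensorPiece 𝒜 (dualGrading K) i,
      (ℓ ⊗ₜ[K] (1 : DualNumbersQuot K) + (1 : A) ⊗ₜ[K] zClass K) * x = 0 → x = 0 := by
  intro x hx hLx
  obtain ⟨⟨a, b⟩, ⟨-, hb⟩, rfl⟩ := tensorPiece_le_map_tmulPair i hx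
  rw [mul_tmulPair_one (zClass_mul_self K), ← map_zero (tmulPair 1 (zClass K))] at hLx
  obtain ⟨hℓa, hab⟩ := Prod.mk_eq_zero.mp (tmulPair_one_zClass_injective K hLx)
  have hb0 : b = 0 := hinj b hb (by linear_combination ℓ * hab - hℓa)
  have ha0 : a = 0 := by simpa [hb0] using hab
  simp [ha0, hb0]

lemma lefschetz_surjective_of_sq_surjective [GradedAlgebra 𝒜] {i : ℕ} {ℓ : A} (hℓ : ℓ ∈ 𝒜 1)
    (hsurj : ∀ y ∈ 𝒜 (i + 1), ∃ x ∈ 𝒜 (i - 1), ℓ ^ 2 * x = y) :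
    ∀ y ∈ tensorPiece 𝒜 (dualGrading K) (i + 1),
      ∃ x ∈ tensorPiece 𝒜 (dualGrading K) i,
        (ℓ ⊗ₜ[K] (1 : DualNumbersQuot K) + (1 : A) ⊗ₜ[K] zClass K) * x = y := by
  intro y hy
  obtain ⟨⟨c, d⟩, ⟨hc, hd⟩, rfl⟩ := tensorPiece_le_map_tmulPair (i + 1) hy
  simp only [add_tsub_cancel_right] at hd
  cases i with
  | zero =>
    -- `i - 1` truncates to `0`; as `ℓ² A₀ ⊆ A₂`, surjectivity onto `A₁` forces `A₁ = 0`.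
    have hA₁ : ∀ v ∈ 𝒜 1, v = 0 := by
      intro v hv
      by_contra hv0
      obtain ⟨w, hw, rfl⟩ := hsurj v hv
      have hv₂ : ℓ ^ 2 * w ∈ 𝒜 2 := by
        simpa using SetLike.mul_mem_graded (SetLike.pow_mem_graded 2 hℓ) hw
      exact absurd (DirectSum.degree_eq_of_mem_mem 𝒜 hv₂ hv hv0) (by norm_num)
    refine ⟨tmulPair 1 (zClass K) (d, 0), by simpa using tmul_one_mem_tensorPiece hd, ?_⟩
    rw [mul_tmulPair_one (zClass_mul_self K), hA₁ ℓ hℓ, hA₁ c hc]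
    simp
  | succ j =>
    obtain ⟨b, hb, hℓb⟩ := hsurj (c - ℓ * d)
      (Submodule.sub_mem _ hc (by simpa [add_comm] using SetLike.mul_mem_graded hℓ hd))
    have hd' : d + ℓ * b ∈ 𝒜 (j + 1) :=
      Submodule.add_mem _ hd (by simpa [add_comm] using SetLike.mul_mem_graded hℓ hb)
    refine ⟨tmulPair 1 (zClass K) (d + ℓ * b, -b), ?_, ?_⟩
    · exact Submodule.add_mem _ (tmul_one_mem_tensorPiece hd')
        (tmul_zClass_mem_tensorPiece (Submodule.neg_mem _ hb))
    · rw [mul_tmulPair_one (zClass_mul_self K)]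
      congr 1
      ext
      · linear_combination hℓb
      · ring

end Lefschetz

theorem stmt18_general {K A : Type*} [Field K] [CommRing A] [Algebra K A]
    (𝒜 : ℕ → Submodule K A) [GradedAlgebra 𝒜]
    (i : ℕ) (ℓ : A) (hℓ : ℓ ∈ 𝒜 1)
    (hsq :
      (∀ x ∈ 𝒜 (i - 1), ℓ ^ 2 * x = 0 → x = 0) ∨
      (∀ y ∈ 𝒜 (i + 1), ∃ x ∈ 𝒜 (i - 1), ℓ ^ 2 * x = y)) :
    (∀ x ∈ tensorPiece 𝒜 (dualGrading K) i,
      (ℓ ⊗ₜ[K] (1 : DualNumbersQuot K) + (1 : A) ⊗ₜ[K] zClass K) * x = 0 → x = 0) ∨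
    (∀ y ∈ tensorPiece 𝒜 (dualGrading K) (i + 1),
      ∃ x ∈ tensorPiece 𝒜 (dualGrading K) i,
        (ℓ ⊗ₜ[K] (1 : DualNumbersQuot K) + (1 : A) ⊗ₜ[K] zClass K) * x = y) :=
  hsq.imp lefschetz_injective_of_sq_injective (lefschetz_surjective_of_sq_surjective hℓ)

/-- Let `C = A ⊗ K[z]/(z²)` for a graded Artinian `K`-algebra `A`, with
`C_{i+1} ≠ 0`. If `ℓ ∈ A_1` is such that `·ℓ : A_j → A_{j+1}` has maximal rank for
all `j` and `·ℓ² : A_{i-1} → A_{i+1}` has maximal rank, then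
`μ_{ℓ+z} : C_i → C_{i+1}` has maximal rank. -/
theorem stmt18 {K A : Type*} [Field K] [CommRing A] [Algebra K A]
    (𝒜 : ℕ → Submodule K A) [GradedAlgebra 𝒜] [FiniteDimensional K A]
    (i : ℕ) (ℓ : A) (hℓ : ℓ ∈ 𝒜 1)
    (hC : tensorPiece 𝒜 (dualGrading K) (i + 1) ≠ ⊥)
    (hmax : ∀ j : ℕ,
      (∀ x ∈ 𝒜 j, ℓ * x = 0 → x = 0) ∨
      (∀ y ∈ 𝒜 (j + 1), ∃ x ∈ 𝒜 j, ℓ * x = y))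
    (hsq :
      (∀ x ∈ 𝒜 (i - 1), ℓ ^ 2 * x = 0 → x = 0) ∨
      (∀ y ∈ 𝒜 (i + 1), ∃ x ∈ 𝒜 (i - 1), ℓ ^ 2 * x = y)) :
    (∀ x ∈ tensorPiece 𝒜 (dualGrading K) i,
      (ℓ ⊗ₜ[K] (1 : DualNumbersQuot K) + (1 : A) ⊗ₜ[K] zClass K) * x = 0 → x = 0) ∨
    (∀ y ∈ tensorPiece 𝒜 (dualGrading K) (i + 1),
      ∃ x ∈ tensorPiece 𝒜 (dualGrading K) i,
        (ℓ ⊗ₜ[K] (1 : DualNumbersQuot K) + (1 : A) ⊗ₜ[K] zClass K) * x = y) :=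
  stmt18_general 𝒜 i ℓ hℓ hsq
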